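/- Let Ω be a domain in ℂ^n containing the origin 0, let t > -n be a real number, and let φ be a plurisubharmonic function on Ω. If ν_φ(0) > 0, then c_t(φ) ≤ (t+n)/ν_φ(0); in particular, for every real c > (t+n)/ν_φ(0) the function ‖z‖^{2t} e^{-2cφ} is not Lebesgue integrable on any neighborhood of 0. -/

import Mathlib

open MeasureTheory Filter Metric Topology Complex
open scoped ENNReal EReal

noncomputable section

/-- `ℂ^n` with its Euclidean (Hermitian) norm. -/
abbrev Cn (n : ℕ) : Type := EuclideanSpace ℂ (Fin n)

/-- Lebesgue measure on `ℂ^n ≅ ℝ^{2n}`. -/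
instance Cn.measureSpace (n : ℕ) : MeasureSpace (Cn n) where
  toMeasurableSpace := WithLp.measurableSpace 2 (Fin n → ℂ)
  volume := Measure.map (WithLp.toLp 2) (volume : Measure (Fin n → ℂ))

/-- Extended-real-valued logarithm, sending `0` (and negative numbers) to `-∞`. -/
def elog (x : ℝ) : EReal := if x ≤ 0 then (⊥ : EReal) else ((Real.log x : ℝ) : EReal)

/-- `exp : EReal → ℝ≥0∞`, with `exp (-∞) = 0` and `exp (+∞) = +∞`. -/
def erealExp (x : EReal) : ℝ≥0∞ :=
  if x = ⊤ then ⊤ else if x = ⊥ then 0 else ENNReal.ofReal (Real.exp x.toReal)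

/-- The positive part of an extended real number, as an element of `ℝ≥0∞`. -/
def erealPosPart (x : EReal) : ℝ≥0∞ := if x = ⊤ then ⊤ else ENNReal.ofReal x.toReal

/-- The integral of an `EReal`-valued function: upper integral of the positive part minus the
upper integral of the negative part. -/
def erealIntegral {α : Type*} [MeasurableSpace α] (μ : Measure α) (f : α → EReal) : EReal :=
  ((∫⁻ a, erealPosPart (f a) ∂μ : ℝ≥0∞) : EReal) -
    ((∫⁻ a, erealPosPart (-(f a)) ∂μ : ℝ≥0∞) : EReal)

/-- A function `f : ℂ → [-∞, ∞)` is subharmonic on an open set `U ⊆ ℂ` if it is upper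
semicontinuous on `U` and satisfies the sub-mean value inequality on circles contained in `U`
(written in the form `2π · f(z) ≤ ∫_0^{2π} f(z + r e^{iθ}) dθ`). -/
def SubhOn (f : ℂ → EReal) (U : Set ℂ) : Prop :=
  UpperSemicontinuousOn f U ∧
  ∀ z ∈ U, ∀ r : ℝ, 0 < r → closedBall z r ⊆ U →
    ((2 * Real.pi : ℝ) : EReal) * f z ≤
      erealIntegral (volume.restrict (Set.Ioc (0:ℝ) (2 * Real.pi)))
        (fun θ : ℝ => f (z + (r : ℂ) * Complex.exp (θ * Complex.I)))

/-- A function `φ : ℂ^n → [-∞, ∞)` is plurisubharmonic on `Ω` if it is upper semicontinuous on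
`Ω`, not identically `-∞`, never `+∞`, and its restriction to every complex line is subharmonic. -/
def PshOn {n : ℕ} (φ : Cn n → EReal) (Ω : Set (Cn n)) : Prop :=
  UpperSemicontinuousOn φ Ω ∧ (∃ z ∈ Ω, φ z ≠ ⊥) ∧ (∀ z ∈ Ω, φ z ≠ ⊤) ∧
  ∀ a v : Cn n, SubhOn (fun w : ℂ => φ (a + w • v)) {w : ℂ | a + w • v ∈ Ω}

/-- A domain in `ℂ^n`: a nonempty connected open set. -/
def IsCnDomain {n : ℕ} (Ω : Set (Cn n)) : Prop := IsOpen Ω ∧ IsConnected Ω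

/-- The Lelong number of `φ` at the origin: `ν_φ(0) = liminf_{z → 0} φ(z) / log ‖z‖`. -/
def lelong {n : ℕ} (φ : Cn n → EReal) : EReal :=
  liminf (fun z : Cn n => φ z * (((Real.log ‖z‖)⁻¹ : ℝ) : EReal)) (𝓝[≠] (0 : Cn n))

/-- The Lelong number at `0` of the restriction of `φ` to the complex line through `0` with
direction `v`: `ν_{φ|_l}(0) = liminf_{λ → 0} φ(λ v) / log |λ|`. -/
def lelongLine {n : ℕ} (φ : Cn n → EReal) (v : Cn n) : EReal :=
  liminf (fun w : ℂ => φ (w • v) * (((Real.log ‖w‖)⁻¹ : ℝ) : EReal)) (𝓝[≠] (0 : ℂ))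

/-- `‖z‖^{2t} e^{-2cφ}` is (Lebesgue) integrable on some neighborhood of the origin. -/
def lctIntegrable {n : ℕ} (t c : ℝ) (φ : Cn n → EReal) : Prop :=
  ∃ U ∈ 𝓝 (0 : Cn n),
    (∫⁻ z in U, ENNReal.ofReal (‖z‖ ^ (2 * t)) *
        erealExp (((-(2 * c) : ℝ) : EReal) * φ z) ∂volume) < ⊤

/-- The weighted log canonical threshold
`c_t(φ) = sup {c ≥ 0 : ‖z‖^{2t} e^{-2cφ}` is integrable near `0}`, as an element of `[0, ∞]`. -/
def lct {n : ℕ} (t : ℝ) (φ : Cn n → EReal) : ℝ≥0∞ :=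
  ⨆ c ∈ {c : ℝ | 0 ≤ c ∧ lctIntegrable t c φ}, ENNReal.ofReal c

/-! If `m < ν_φ(0)` then `φ(z) ≤ m log ‖z‖` near `0`, hence `‖z‖^{2t} e^{-2cφ(z)} ≥ ‖z‖^{2t - 2cm}`.
For `c > (t+n)/ν_φ(0)` one may take `m = (t+n)/c`, and then the exponent `2t - 2cm = -2n` is
`-dim_ℝ ℂ^n`, so in polar coordinates the integrand is not integrable at the origin. -/

open Set

-- `Cn.measureSpace` is not Mathlib's measure space on `EuclideanSpace`, so its instances are
-- not found automatically.
instance Cn.borelSpace (n : ℕ) : BorelSpace (Cn n) :=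
  inferInstanceAs (BorelSpace (PiLp 2 (fun _ : Fin n => ℂ)))

instance Cn.isAddHaar (n : ℕ) : (volume : Measure (Cn n)).IsAddHaarMeasure :=
  (PiLp.continuousLinearEquiv 2 ℂ (fun _ : Fin n => ℂ)).symm.isAddHaarMeasure_map
    (volume : Measure (Fin n → ℂ))

lemma finrank_real_Cn (n : ℕ) : Module.finrank ℝ (Cn n) = 2 * n := by
  rw [← Module.finrank_mul_finrank ℝ ℂ (Cn n), Complex.finrank_real_complex,
    finrank_euclideanSpace, Fintype.card_fin]

lemma erealExp_eq_exp (x : EReal) : erealExp x = x.exp := by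
  induction x <;> simp [erealExp]

section NormRpow

variable {E : Type*} [NormedAddCommGroup E] [NormedSpace ℝ E] [FiniteDimensional ℝ E]
  [MeasurableSpace E] [BorelSpace E] [Nontrivial E] (μ : Measure E) [μ.IsAddHaarMeasure]

lemma not_integrableOn_ball_norm_rpow {p r : ℝ} (hp : p + Module.finrank ℝ E ≤ 0) (hr : 0 < r) :
    ¬ IntegrableOn (fun x : E => ‖x‖ ^ p) (ball 0 r) μ := by
  rw [integrableOn_fun_norm_addHaar μ (f := fun y => y ^ p)]
  intro h
  have hpow : IntegrableOn (fun y : ℝ => y ^ ((Module.finrank ℝ E : ℝ) - 1 + p)) (Ioo 0 r) := by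
    refine h.congr_fun (fun y hy => ?_) measurableSet_Ioo
    have hd : 1 ≤ Module.finrank ℝ E := Module.finrank_pos
    simp only [smul_eq_mul]
    rw [Real.rpow_add hy.1, ← Real.rpow_natCast, Nat.cast_sub hd, Nat.cast_one]
  rw [intervalIntegral.integrableOn_Ioo_rpow_iff hr] at hpow
  linarith

lemma lintegral_ball_norm_rpow_eq_top {p r : ℝ} (hp : p + Module.finrank ℝ E ≤ 0)
    (hr : 0 < r) : ∫⁻ x in ball 0 r, ENNReal.ofReal (‖x‖ ^ p) ∂μ = ⊤ := by
  by_contra h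
  refine not_integrableOn_ball_norm_rpow μ hp hr
    ⟨(measurable_norm.pow_const p).aestronglyMeasurable, ?_⟩
  rw [hasFiniteIntegral_iff_ofReal (.of_forall fun x => by positivity)]
  exact lt_top_iff_ne_top.2 h

end NormRpow

lemma EReal.le_coe_mul_of_coe_le_mul_inv {x : EReal} {m L : ℝ} (hL : L < 0)
    (h : (m : EReal) ≤ x * ((L⁻¹ : ℝ) : EReal)) : x ≤ ((m * L : ℝ) : EReal) :=
  calc x = x * ((L⁻¹ : ℝ) : EReal) * (L : EReal) := by
        rw [mul_assoc, ← EReal.coe_mul, inv_mul_cancel₀ hL.ne, EReal.coe_one, mul_one]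
    _ ≤ (m : EReal) * (L : EReal) := EReal.mul_le_mul_of_nonpos_right h (by exact_mod_cast hL.le)
    _ = ((m * L : ℝ) : EReal) := (EReal.coe_mul _ _).symm

lemma eventually_le_mul_log_norm_of_lt_lelong {n : ℕ} {φ : Cn n → EReal} {m : ℝ}
    (hm : (m : EReal) < lelong φ) :
    ∀ᶠ z in 𝓝[≠] (0 : Cn n), φ z ≤ ((m * Real.log ‖z‖ : ℝ) : EReal) := by
  have hsmall : ∀ᶠ z in 𝓝[≠] (0 : Cn n), ‖z‖ < 1 :=
    nhdsWithin_le_nhds (eventually_norm_sub_lt 0 one_pos |>.mono fun z hz => by simpa using hz)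
  filter_upwards [eventually_lt_of_lt_liminf hm, hsmall, self_mem_nhdsWithin] with z hlt h1 hz0
  exact EReal.le_coe_mul_of_coe_le_mul_inv
    (Real.log_neg (norm_pos_iff.2 hz0) h1) hlt.le

lemma ofReal_rpow_le_erealExp {x : EReal} {c m r : ℝ} (hc : 0 ≤ c) (hr : 0 < r)
    (hx : x ≤ ((m * Real.log r : ℝ) : EReal)) :
    ENNReal.ofReal (r ^ (-(2 * c * m))) ≤ erealExp (((-(2 * c) : ℝ) : EReal) * x) := by
  rw [erealExp_eq_exp, Real.rpow_def_of_pos hr, ← EReal.exp_coe]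
  refine EReal.exp_monotone ?_
  calc ((Real.log r * -(2 * c * m) : ℝ) : EReal)
      = ((m * Real.log r : ℝ) : EReal) * ((-(2 * c) : ℝ) : EReal) := by
        rw [← EReal.coe_mul]; ring_nf
    _ ≤ x * ((-(2 * c) : ℝ) : EReal) :=
        EReal.mul_le_mul_of_nonpos_right hx (by exact_mod_cast (by linarith : -(2 * c) ≤ 0))
    _ = ((-(2 * c) : ℝ) : EReal) * x := mul_comm _ _

lemma not_lctIntegrable_of_lt_lelong {n : ℕ} (hn : 0 < n) {φ : Cn n → EReal} {t c m : ℝ}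
    (hm : (m : EReal) < lelong φ) (hc : 0 ≤ c) (hcm : t + n ≤ c * m) :
    ¬ lctIntegrable t c φ := by
  rintro ⟨U, hU, hfin⟩
  have : Nonempty (Fin n) := ⟨⟨0, hn⟩⟩
  have hlog := eventually_nhdsWithin_iff.1 (eventually_le_mul_log_norm_of_lt_lelong hm)
  obtain ⟨r, hr, hball⟩ := Metric.eventually_nhds_iff_ball.1 (Filter.Eventually.and hU hlog)
  set p := 2 * t + -(2 * c * m)
  have hp : p + Module.finrank ℝ (Cn n) ≤ 0 := by
    rw [finrank_real_Cn]; push_cast; linarith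
  have hp0 : p ≠ 0 := by
    have : (1 : ℝ) ≤ n := by exact_mod_cast hn
    intro h; rw [h] at hp; push_cast [finrank_real_Cn] at hp; linarith
  have hpoint : ∀ z ∈ ball (0 : Cn n) r, ENNReal.ofReal (‖z‖ ^ p) ≤
      ENNReal.ofReal (‖z‖ ^ (2 * t)) * erealExp (((-(2 * c) : ℝ) : EReal) * φ z) := by
    intro z hz
    rcases eq_or_ne z 0 with rfl | hz0
    · simp [Real.zero_rpow hp0]
    have hpos : 0 < ‖z‖ := norm_pos_iff.2 hz0
    rw [Real.rpow_add hpos, ENNReal.ofReal_mul (by positivity)]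
    gcongr
    exact ofReal_rpow_le_erealExp hc hpos ((hball z hz).2 hz0)
  refine hfin.not_ge ?_
  calc ⊤ = ∫⁻ z in ball (0 : Cn n) r, ENNReal.ofReal (‖z‖ ^ p) :=
        (lintegral_ball_norm_rpow_eq_top volume hp hr).symm
    _ ≤ ∫⁻ z in ball (0 : Cn n) r, ENNReal.ofReal (‖z‖ ^ (2 * t)) *
          erealExp (((-(2 * c) : ℝ) : EReal) * φ z) :=
        setLIntegral_mono' measurableSet_ball hpoint
    _ ≤ _ := lintegral_mono_set fun z hz => (hball z hz).1

lemma EReal.exists_coe_lt_and_le_mul_of_div_lt {a c : ℝ} {ν : EReal} (ha : 0 ≤ a) (hν : 0 < ν)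
    (h : (a : EReal) / ν < c) : ∃ m : ℝ, (m : EReal) < ν ∧ a ≤ c * m := by
  have hc : 0 < c := by exact_mod_cast (EReal.div_nonneg (by exact_mod_cast ha) hν.le).trans_lt h
  refine ⟨a / c, ?_, (mul_div_cancel₀ a hc.ne').ge⟩
  rcases eq_or_ne ν ⊤ with rfl | hνtop
  · exact EReal.coe_lt_top _
  rw [EReal.div_lt_iff hν hνtop] at h
  rw [EReal.coe_div, EReal.div_lt_iff (by exact_mod_cast hc) (EReal.coe_ne_top c), mul_comm]
  exact h

lemma coe_lct_le {n : ℕ} {t : ℝ} {φ : Cn n → EReal} {B : EReal} (hB : 0 ≤ B)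
    (h : ∀ c : ℝ, 0 ≤ c → lctIntegrable t c φ → (c : EReal) ≤ B) : (lct t φ : EReal) ≤ B := by
  rw [← EReal.coe_toENNReal hB, EReal.coe_ennreal_le_coe_ennreal_iff]
  refine iSup₂_le fun c ⟨hc, hci⟩ => ?_
  rw [← EReal.real_coe_toENNReal]
  exact EReal.toENNReal_le_toENNReal (h c hc hci)

theorem statement2_general {n : ℕ} (hn : 0 < n) (t : ℝ) (ht : -(n : ℝ) < t)
    (φ : Cn n → EReal) (hν : 0 < lelong φ) :
    (lct t φ : EReal) ≤ ((t + n : ℝ) : EReal) / lelong φ ∧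
    ∀ c : ℝ, ((t + n : ℝ) : EReal) / lelong φ < (c : EReal) → ¬ lctIntegrable t c φ := by
  have htn : 0 ≤ t + n := by linarith
  have hB : (0 : EReal) ≤ ((t + n : ℝ) : EReal) / lelong φ :=
    EReal.div_nonneg (EReal.coe_nonneg.2 htn) hν.le
  have hdiv : ∀ c : ℝ, ((t + n : ℝ) : EReal) / lelong φ < (c : EReal) →
      ¬ lctIntegrable t c φ := fun c hc => by
    obtain ⟨m, hm, hcm⟩ := EReal.exists_coe_lt_and_le_mul_of_div_lt htn hν hc
    exact not_lctIntegrable_of_lt_lelong hn hm (by exact_mod_cast hB.trans hc.le) hcm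
  exact ⟨coe_lct_le hB fun c _ hci => not_lt.1 fun hc => hdiv c hc hci, hdiv⟩

/-- If `ν_φ(0) > 0` then `c_t(φ) ≤ (t+n)/ν_φ(0)`; in particular for every real
`c > (t+n)/ν_φ(0)` the function `‖z‖^{2t} e^{-2cφ}` is not integrable on any neighborhood
of `0`. -/
theorem statement2 {n : ℕ} (hn : 0 < n) (Ω : Set (Cn n)) (hΩ : IsCnDomain Ω)
    (h0 : (0 : Cn n) ∈ Ω) (t : ℝ) (ht : -(n : ℝ) < t)
    (φ : Cn n → EReal) (hφ : PshOn φ Ω) (hν : 0 < lelong φ) :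
    (lct t φ : EReal) ≤ ((t + n : ℝ) : EReal) / lelong φ ∧
    ∀ c : ℝ, ((t + n : ℝ) : EReal) / lelong φ < (c : EReal) → ¬ lctIntegrable t c φ :=
  statement2_general hn t ht φ hν

end
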